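/- arXiv:1903.03574 — 4 statements merged into one kernel-verified Lean document; each statement's English description precedes it below -/
import Mathlib

section
/- Let Q ⊂ ℝⁿ be a closed cube and let μ_j, μ be finite nonnegative non-atomic Borel measures on Q such that μ_j converges weakly-* to μ. Then for every ε > 0 there exists δ > 0 such that for every closed sub-cube Q' ⊂ Q with faces parallel to the coordinate hyperplanes and Lebesgue measure less than δ, one has sup_j μ_j(Q') < ε. -/
/-!
A sub-cube of volume `r ^ n` with corner `c` lies in the sup-norm ball of radius `r` about
`c ∈ Q`, so it suffices to bound `μ_j` on small balls centred in `Q`, uniformly in `j`.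
Around a fixed `x`, the portmanteau inequality `limsup μ_j F ≤ μ F` for closed `F` together with
`μ {x} = 0` makes some ball small for all large `j`, and since each of the finitely many
remaining `μ_j` has no atom at `x` the radius can be shrunk to serve them too. Compactness of `Q`
(a Lebesgue number of the resulting cover by balls) makes the radius uniform in `x`.
-/

open MeasureTheory Filter Topology Metric BoundedContinuousFunction
open scoped ENNReal

section

variable {X : Type*} [MetricSpace X] [MeasurableSpace X] [OpensMeasurableSpace X]

theorem eventually_measure_closedBall_lt (ν : Measure X) [IsFiniteMeasure ν] {x : X}
    (hx : ν {x} = 0) {ε : ℝ≥0∞} (hε : 0 < ε) : ∀ᶠ r in 𝓝 (0 : ℝ), ν (closedBall x r) < ε := by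
  have h := tendsto_measure_cthickening_of_isClosed (μ := ν) (s := {x})
    ⟨1, one_pos, measure_ne_top _ _⟩ isClosed_singleton
  rw [hx] at h
  filter_upwards [h.eventually_lt_const hε] with r hr
  exact (measure_mono (closedBall_subset_cthickening_singleton x r)).trans_lt hr

theorem limsup_measure_closed_le_of_forall_integral_tendsto {ι : Type*} {l : Filter ι}
    [HasOuterApproxClosed X] {μ : Measure X} {μs : ι → Measure X}
    [IsFiniteMeasure μ] [∀ j, IsFiniteMeasure (μs j)]
    (hconv : ∀ f : X →ᵇ ℝ, Tendsto (fun j => ∫ x, f x ∂(μs j)) l (𝓝 (∫ x, f x ∂μ)))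
    {F : Set X} (hF : IsClosed F) :
    limsup (fun j => μs j F) l ≤ μ F :=
  FiniteMeasure.limsup_measure_closed_le_of_tendsto (μ := ⟨μ, inferInstance⟩)
    (μs := fun j => ⟨μs j, inferInstance⟩)
    (FiniteMeasure.tendsto_iff_forall_integral_tendsto.2 hconv) hF

theorem exists_pos_forall_measure_closedBall_lt [HasOuterApproxClosed X]
    {μ : Measure X} {μs : ℕ → Measure X} [IsFiniteMeasure μ] [∀ j, IsFiniteMeasure (μs j)]
    (hconv : ∀ f : X →ᵇ ℝ, Tendsto (fun j => ∫ x, f x ∂(μs j)) atTop (𝓝 (∫ x, f x ∂μ)))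
    {x : X} (hμx : μ {x} = 0) (hμsx : ∀ j, μs j {x} = 0) {ε : ℝ≥0∞} (hε : 0 < ε) :
    ∃ ρ > 0, ∀ j, μs j (closedBall x ρ) < ε := by
  have hsmall : ∀ᶠ r in 𝓝[>] (0 : ℝ), μ (closedBall x r) < ε :=
    (eventually_measure_closedBall_lt μ hμx hε).filter_mono nhdsWithin_le_nhds
  obtain ⟨η, hμη, hη⟩ := (hsmall.and self_mem_nhdsWithin).exists
  have htail : ∀ᶠ j in atTop, μs j (closedBall x η) < ε :=
    eventually_lt_of_limsup_lt
      ((limsup_measure_closed_le_of_forall_integral_tendsto hconv isClosed_closedBall).trans_lt hμη)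
  obtain ⟨J, hJ⟩ := htail.exists_forall_of_atTop
  have hhead : ∀ᶠ r in 𝓝[>] (0 : ℝ),
      r ∈ Set.Ioc 0 η ∧ ∀ j ∈ Finset.range J, μs j (closedBall x r) < ε :=
    Filter.Eventually.and (Ioc_mem_nhdsGT hη) ((Finset.range J).eventually_all.2 fun j _ =>
      (eventually_measure_closedBall_lt (μs j) (hμsx j) hε).filter_mono nhdsWithin_le_nhds)
  obtain ⟨ρ, ⟨hρpos, hρη⟩, hρ⟩ := hhead.exists
  refine ⟨ρ, hρpos, fun j => ?_⟩
  rcases lt_or_ge j J with hj | hj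
  · exact hρ j (Finset.mem_range.2 hj)
  · exact (measure_mono (closedBall_subset_closedBall hρη)).trans_lt (hJ j hj)

end

theorem IsCompact.exists_pos_forall_measure_closedBall_lt {X ι : Type*} [MetricSpace X]
    [MeasurableSpace X] {μs : ι → Measure X} {K : Set X} (hK : IsCompact K) {ε : ℝ≥0∞}
    (h : ∀ x ∈ K, ∃ ρ > 0, ∀ j, μs j (closedBall x ρ) < ε) :
    ∃ δ > 0, ∀ x ∈ K, ∀ j, μs j (closedBall x δ) < ε := by
  choose! ρ hρpos hρ using h
  obtain ⟨δ, hδ, hcover⟩ := lebesgue_number_lemma_of_metric (c := fun y : K => ball (y : X) (ρ y))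
    hK (fun _ => isOpen_ball) fun x hx => Set.mem_iUnion.2 ⟨⟨x, hx⟩, mem_ball_self (hρpos x hx)⟩
  refine ⟨δ / 2, half_pos hδ, fun x hx j => ?_⟩
  obtain ⟨⟨y, hy⟩, hxy⟩ := hcover x hx
  calc μs j (closedBall x (δ / 2)) ≤ μs j (closedBall y (ρ y)) :=
        measure_mono <| (closedBall_subset_ball (half_lt_self hδ)).trans <|
          hxy.trans ball_subset_closedBall
    _ < ε := hρ y hy j

theorem Icc_add_const_subset_closedBall {ι : Type*} [Fintype ι] (c : ι → ℝ) {r : ℝ} (hr : 0 ≤ r) :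
    Set.Icc c (fun i => c i + r) ⊆ closedBall c r := by
  intro y hy
  rw [mem_closedBall, dist_pi_le_iff hr]
  intro i
  rw [Real.dist_eq, abs_le]
  constructor <;> linarith [hy.1 i, hy.2 i]

theorem volume_Icc_add_const {ι : Type*} [Fintype ι] (c : ι → ℝ) {r : ℝ} (hr : 0 ≤ r) :
    volume (Set.Icc c (fun i => c i + r)) = ENNReal.ofReal (r ^ Fintype.card ι) := by
  simp [Real.volume_Icc_pi, ENNReal.ofReal_pow hr]

theorem stmt2_general (n : ℕ) (a : Fin n → ℝ) (L : ℝ)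
    (Q : Set (Fin n → ℝ)) (hQ : Q = Set.Icc a (fun i => a i + L))
    (μ : Measure (Fin n → ℝ)) (μs : ℕ → Measure (Fin n → ℝ))
    [IsFiniteMeasure μ] [∀ j, IsFiniteMeasure (μs j)]
    (hμ_na : ∀ x, μ {x} = 0) (hμs_na : ∀ j x, (μs j) {x} = 0)
    (hconv : ∀ f : (Fin n → ℝ) → ℝ, Continuous f →
      Tendsto (fun j => ∫ x, f x ∂(μs j)) atTop (𝓝 (∫ x, f x ∂μ))) :
    ∀ ε : ℝ, 0 < ε → ∃ δ : ℝ, 0 < δ ∧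
      ∀ (c : Fin n → ℝ) (r : ℝ), 0 < r →
        Set.Icc c (fun i => c i + r) ⊆ Q →
        volume (Set.Icc c (fun i => c i + r)) < ENNReal.ofReal δ →
        ∀ j, (μs j) (Set.Icc c (fun i => c i + r)) < ENNReal.ofReal ε := by
  intro ε hε
  have hQc : IsCompact Q := hQ ▸ isCompact_Icc
  obtain ⟨δ, hδ, hball⟩ := hQc.exists_pos_forall_measure_closedBall_lt
    fun x _ => exists_pos_forall_measure_closedBall_lt (fun f => hconv f f.continuous)
      (hμ_na x) (fun j => hμs_na j x) (ENNReal.ofReal_pos.2 hε)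
  refine ⟨δ ^ n, by positivity, fun c r hr hcube hvol j => ?_⟩
  rw [volume_Icc_add_const c hr.le, Fintype.card_fin,
    ENNReal.ofReal_lt_ofReal_iff (by positivity)] at hvol
  have hrδ : r < δ := lt_of_pow_lt_pow_left₀ n hδ.le hvol
  have hc : c ∈ Q := hcube ⟨le_rfl, fun i => le_add_of_nonneg_right hr.le⟩
  calc μs j (Set.Icc c (fun i => c i + r)) ≤ μs j (closedBall c δ) :=
        measure_mono <| (Icc_add_const_subset_closedBall c hr.le).trans <|
          closedBall_subset_closedBall hrδ.le
    _ < ENNReal.ofReal ε := hball c hc j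

/-- Let `Q ⊂ ℝⁿ` be a closed cube and `μ_j, μ` finite nonnegative non-atomic
Borel measures on `Q` (i.e. supported in `Q`) with `μ_j → μ` weakly-* (tested against
continuous functions). Then for every `ε > 0` there is `δ > 0` such that every closed
axis-parallel sub-cube `Q' ⊆ Q` of Lebesgue measure less than `δ` satisfies
`sup_j μ_j(Q') < ε`. -/
theorem stmt2 (n : ℕ) (a : Fin n → ℝ) (L : ℝ) (hL : 0 < L)
    (Q : Set (Fin n → ℝ)) (hQ : Q = Set.Icc a (fun i => a i + L))
    (μ : Measure (Fin n → ℝ)) (μs : ℕ → Measure (Fin n → ℝ))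
    [IsFiniteMeasure μ] [∀ j, IsFiniteMeasure (μs j)]
    (hμQ : μ Qᶜ = 0) (hμsQ : ∀ j, (μs j) Qᶜ = 0)
    (hμ_na : ∀ x, μ {x} = 0) (hμs_na : ∀ j x, (μs j) {x} = 0)
    (hconv : ∀ f : (Fin n → ℝ) → ℝ, Continuous f →
      Tendsto (fun j => ∫ x, f x ∂(μs j)) atTop (𝓝 (∫ x, f x ∂μ))) :
    ∀ ε : ℝ, 0 < ε → ∃ δ : ℝ, 0 < δ ∧
      ∀ (c : Fin n → ℝ) (r : ℝ), 0 < r →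
        Set.Icc c (fun i => c i + r) ⊆ Q →
        volume (Set.Icc c (fun i => c i + r)) < ENNReal.ofReal δ →
        ∀ j, (μs j) (Set.Icc c (fun i => c i + r)) < ENNReal.ofReal ε :=
  stmt2_general n a L Q hQ μ μs hμ_na hμs_na hconv
end

section
/- Let u : ℝⁿ → V be a locally integrable function (V a finite-dimensional normed space) and suppose there exists a function ω : [0,∞) × ℝⁿ → [0,∞], increasing in the first variable with lim_{r↓0} ω(r;x) = 0 for every x, such that for all x ∈ ℝⁿ and r > 0, the essential supremum over the ball B_r(x) of |u − (u)_{x,r}| is at most ω(r;x), where (u)_{x,r} is the average of u over B_r(x). Then u has a representative u* (defined at every point as the limit of averages u*(x) = lim_{r↓0} (u)_{x,r}) that is everywhere continuous, and moreover ‖u − u*(x₀)‖_{L^∞(B_r(x₀))} ≤ 3 ω(r; x₀) for all x₀ and r > 0. -/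
open MeasureTheory Filter Topology Metric ENNReal

/-- If a locally integrable `u : ℝⁿ → V` satisfies the uniform oscillation
bound `‖u − (u)_{x,r}‖_{L^∞(B_r(x))} ≤ ω(r;x)` with `ω(·;x)` increasing and tending to `0`
as `r ↓ 0`, then `u` has an everywhere-defined representative `u*` given by the limit of
averages, which is continuous, and `‖u − u*(x₀)‖_{L^∞(B_r(x₀))} ≤ 3ω(r;x₀)` for all
`x₀, r > 0`. -/
theorem stmt4 (n : ℕ) (V : Type*) [NormedAddCommGroup V] [NormedSpace ℝ V]
    [FiniteDimensional ℝ V]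
    (u : (Fin n → ℝ) → V) (hu : LocallyIntegrable u volume)
    (ω : ℝ → (Fin n → ℝ) → ℝ≥0∞)
    (hω_mono : ∀ x, MonotoneOn (fun r => ω r x) (Set.Ici (0 : ℝ)))
    (hω_lim : ∀ x, Tendsto (fun r => ω r x) (𝓝[>] (0 : ℝ)) (𝓝 0))
    (hosc : ∀ (x : Fin n → ℝ) (r : ℝ), 0 < r →
      ∀ᵐ y ∂(volume.restrict (ball x r)),
        (‖u y - ⨍ z in ball x r, u z‖₊ : ℝ≥0∞) ≤ ω r x) :
    ∃ ustar : (Fin n → ℝ) → V,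
      (∀ x, Tendsto (fun r => ⨍ z in ball x r, u z) (𝓝[>] (0 : ℝ)) (𝓝 (ustar x))) ∧
      Continuous ustar ∧ (∀ᵐ x ∂volume, u x = ustar x) ∧
      ∀ (x₀ : Fin n → ℝ) (r : ℝ), 0 < r →
        ∀ᵐ y ∂(volume.restrict (ball x₀ r)),
          (‖u y - ustar x₀‖₊ : ℝ≥0∞) ≤ 3 * ω r x₀ := by
  haveI : CompleteSpace V := FiniteDimensional.complete ℝ V
  set avg : (Fin n → ℝ) → ℝ → V := fun x r => ⨍ z in ball x r, u z with havg
  -- cross estimate between averages over nested balls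
  have cross : ∀ (x x' : Fin n → ℝ) (s r : ℝ), 0 < s → 0 < r → ball x' s ⊆ ball x r →
      edist (avg x' s) (avg x r) ≤ ω s x' + ω r x := by
    intro x x' s r hs hr hsub
    have h1 := hosc x' s hs
    have h2 : ∀ᵐ y ∂(volume.restrict (ball x' s)), (‖u y - avg x r‖₊ : ℝ≥0∞) ≤ ω r x :=
      ae_restrict_of_ae_restrict_of_subset hsub (hosc x r hr)
    haveI : (ae (volume.restrict (ball x' s))).NeBot := by
      rw [ae_neBot, ← Measure.measure_univ_ne_zero, Measure.restrict_apply_univ]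
      exact (measure_ball_pos volume x' hs).ne'
    obtain ⟨y, hy1, hy2⟩ := (h1.and h2).exists
    calc edist (avg x' s) (avg x r)
        ≤ edist (avg x' s) (u y) + edist (u y) (avg x r) := edist_triangle _ _ _
      _ ≤ ω s x' + ω r x := by
          refine add_le_add ?_ ?_
          · rw [edist_comm, edist_eq_enorm_sub]; exact hy1
          · rw [edist_eq_enorm_sub]; exact hy2
  -- find small radii with small ω
  have key0 : ∀ (x : Fin n → ℝ) (ε : ℝ≥0∞), 0 < ε → ∃ r₀ > (0:ℝ), ω r₀ x < ε := by
    intro x ε hε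
    have h1 : ∀ᶠ r in 𝓝[>] (0:ℝ), ω r x < ε := (hω_lim x).eventually_lt_const hε
    obtain ⟨r₀, h, hm⟩ := (h1.and eventually_mem_nhdsWithin).exists
    exact ⟨r₀, hm, h⟩
  -- Cauchy property of averages as r ↓ 0
  have cauchy : ∀ x, Cauchy (Filter.map (avg x) (𝓝[>] (0:ℝ))) := by
    intro x
    rw [EMetric.cauchy_iff]
    refine ⟨Filter.map_neBot.ne, fun ε hε => ?_⟩
    obtain ⟨r₀, hr₀, hlt⟩ := key0 x (min (ε / 4) 1)
      (lt_min (ENNReal.div_pos hε.ne' (by norm_num)) zero_lt_one)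
    have hfin : ω r₀ x < ⊤ := hlt.trans_le ((min_le_right _ _).trans le_top)
    refine ⟨avg x '' Set.Ioo 0 r₀, Filter.image_mem_map
      (Ioo_mem_nhdsGT_of_mem ⟨le_rfl, hr₀⟩), ?_⟩
    rintro _ ⟨s, hs, rfl⟩ _ ⟨t, ht, rfl⟩
    have hb : ∀ q : ℝ, q ∈ Set.Ioo (0:ℝ) r₀ → edist (avg x q) (avg x r₀) ≤ 2 * ω r₀ x := by
      intro q hq
      have := cross x x q r₀ hq.1 hr₀ (ball_subset_ball hq.2.le)
      refine this.trans ?_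
      rw [two_mul]
      exact add_le_add (hω_mono x hq.1.le hr₀.le hq.2.le) le_rfl
    calc edist (avg x s) (avg x t)
        ≤ edist (avg x s) (avg x r₀) + edist (avg x r₀) (avg x t) := edist_triangle _ _ _
      _ ≤ 2 * ω r₀ x + 2 * ω r₀ x := by
          refine add_le_add (hb s hs) ?_
          rw [edist_comm]; exact hb t ht
      _ = 4 * ω r₀ x := by ring
      _ < 4 * (ε / 4) := by
          rw [ENNReal.mul_lt_mul_iff_right (by norm_num) (by norm_num)]
          exact hlt.trans_le (min_le_left _ _)
      _ ≤ ε := ENNReal.mul_div_le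
  have hex : ∀ x, ∃ v : V, Tendsto (avg x) (𝓝[>] (0:ℝ)) (𝓝 v) := fun x =>
    CompleteSpace.complete (cauchy x)
  choose ustar htend using hex
  -- key estimate: for x' ∈ B_r(x), edist (ustar x') (avg x r) ≤ ω r x
  have keyA : ∀ (x x' : Fin n → ℝ) (r : ℝ), 0 < r → dist x' x < r →
      edist (ustar x') (avg x r) ≤ ω r x := by
    intro x x' r hr hx'
    have hev : ∀ᶠ s in 𝓝[>] (0:ℝ), ball x' s ⊆ ball x r := by
      filter_upwards [Ioo_mem_nhdsGT_of_mem
        (Set.mem_Ico.2 ⟨le_rfl, show (0:ℝ) < r - dist x' x by linarith⟩)] with s hs y hy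
      rw [mem_ball] at hy ⊢
      calc dist y x ≤ dist y x' + dist x' x := dist_triangle _ _ _
        _ < s + dist x' x := by linarith
        _ < r := by have := hs.2; linarith
    refine ENNReal.le_of_forall_pos_le_add fun ε hε hfin => ?_
    have hev2 : ∀ᶠ s in 𝓝[>] (0:ℝ), ω s x' < (ε : ℝ≥0∞) :=
      (hω_lim x').eventually_lt_const (by exact_mod_cast hε)
    have hev3 : ∀ᶠ s in 𝓝[>] (0:ℝ),
        edist (avg x' s) (avg x r) ≤ ω r x + (ε : ℝ≥0∞) := by
      filter_upwards [hev, hev2, eventually_mem_nhdsWithin] with s h1 h2 h3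
      calc edist (avg x' s) (avg x r) ≤ ω s x' + ω r x := cross x x' s r h3 hr h1
        _ ≤ ω r x + ε := by rw [add_comm]; exact add_le_add le_rfl h2.le
    have hT : Tendsto (fun s => edist (avg x' s) (avg x r)) (𝓝[>] (0:ℝ))
        (𝓝 (edist (ustar x') (avg x r))) := (htend x').edist tendsto_const_nhds
    exact le_of_tendsto hT hev3
  have keyAx : ∀ (x : Fin n → ℝ) (r : ℝ), 0 < r → edist (ustar x) (avg x r) ≤ ω r x :=
    fun x r hr => keyA x x r hr (by simpa using hr)
  -- continuity
  have hcont : Continuous ustar := by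
    rw [continuous_iff_continuousAt]
    intro x
    rw [Metric.continuousAt_iff]
    intro ε hε
    obtain ⟨r₀, hr₀, hlt⟩ := key0 x (ENNReal.ofReal (ε / 2)) (by
      rw [ENNReal.ofReal_pos]; linarith)
    refine ⟨r₀, hr₀, fun {x'} hx' => ?_⟩
    have h1 : edist (ustar x') (ustar x) ≤ ω r₀ x + ω r₀ x := by
      calc edist (ustar x') (ustar x)
          ≤ edist (ustar x') (avg x r₀) + edist (avg x r₀) (ustar x) := edist_triangle _ _ _
        _ ≤ ω r₀ x + ω r₀ x := by
            refine add_le_add (keyA x x' r₀ hr₀ hx') ?_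
            rw [edist_comm]; exact keyAx x r₀ hr₀
    have h2 : ω r₀ x + ω r₀ x < ENNReal.ofReal ε := by
      calc ω r₀ x + ω r₀ x < ENNReal.ofReal (ε / 2) + ENNReal.ofReal (ε / 2) :=
            ENNReal.add_lt_add hlt hlt
        _ = ENNReal.ofReal ε := by rw [← ENNReal.ofReal_add (by linarith) (by linarith)]; ring_nf
    exact edist_lt_ofReal.mp (h1.trans_lt h2)
  -- a.e. equality via Lebesgue differentiation
  have hball : ∀ (x : Fin n → ℝ) (r : ℝ), 0 < r →
      avg x r = ⨍ z in closedBall x r, u z := by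
    intro x r hr
    have hnull : volume (closedBall x r \ ball x r) = 0 := by
      refine measure_mono_null (fun y hy => ?_)
        (Measure.addHaar_sphere_of_ne_zero volume x hr.ne')
      rcases hy with ⟨h1, h2⟩
      rw [mem_closedBall] at h1
      rw [mem_ball, not_lt] at h2
      exact le_antisymm h1 h2
    have hset : ball x r =ᵐ[volume] closedBall x r := by
      rw [Filter.eventuallyEq_set]
      have : ∀ᵐ y ∂(volume : Measure (Fin n → ℝ)), y ∉ closedBall x r \ ball x r :=
        measure_eq_zero_iff_ae_notMem.1 hnull
      filter_upwards [this] with y hy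
      constructor
      · intro h; exact ball_subset_closedBall h
      · intro h; by_contra hb; exact hy ⟨h, hb⟩
    show (⨍ z in ball x r, u z) = _
    rw [setAverage_eq, setAverage_eq, measureReal_congr hset, Measure.restrict_congr_set hset]
  have hae : ∀ᵐ x ∂(volume : Measure (Fin n → ℝ)), u x = ustar x := by
    filter_upwards [IsUnifLocDoublingMeasure.ae_tendsto_average (μ := volume) hu 1] with x hx
    have hcb : Tendsto (fun r => ⨍ z in closedBall x r, u z) (𝓝[>] (0:ℝ)) (𝓝 (u x)) := by
      refine hx (fun _ => x) id tendsto_id ?_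
      filter_upwards [eventually_mem_nhdsWithin] with r hr
      simp only [one_mul, mem_closedBall, dist_self]
      exact (Set.mem_Ioi.1 hr).le
    have : Tendsto (avg x) (𝓝[>] (0:ℝ)) (𝓝 (u x)) := by
      refine hcb.congr' ?_
      filter_upwards [eventually_mem_nhdsWithin] with r hr
      exact (hball x r hr).symm
    exact tendsto_nhds_unique this (htend x)
  refine ⟨ustar, htend, hcont, hae, fun x₀ r hr => ?_⟩
  filter_upwards [hosc x₀ r hr] with y hy
  calc (‖u y - ustar x₀‖₊ : ℝ≥0∞)
      ≤ (‖u y - avg x₀ r‖₊ : ℝ≥0∞) + ‖avg x₀ r - ustar x₀‖₊ := by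
        simp only [← enorm_eq_nnnorm, ← edist_eq_enorm_sub]
        exact edist_triangle _ _ _
    _ ≤ ω r x₀ + ω r x₀ := by
        refine add_le_add hy ?_
        rw [← enorm_eq_nnnorm, ← edist_eq_enorm_sub, edist_comm]
        exact keyAx x₀ r hr
    _ ≤ 3 * ω r x₀ := by
        rw [← two_mul]
        exact mul_le_mul_left (by norm_num) _
end

section
/- Let μ and ν be finite nonnegative Borel measures on ℝⁿ with μ absolutely continuous with respect to ν, and suppose there are constants c > 0 and α > 0 such that μ(E) ≤ c · ν(E)^{1+α} for every Borel set E ⊂ ℝⁿ. Then μ is purely atomic, i.e., μ is a countable sum of weighted Dirac measures. -/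
open MeasureTheory ENNReal Metric Filter Set

/-- If `μ ≪ ν` are finite nonnegative Borel measures on `ℝⁿ` with
`μ(E) ≤ c·ν(E)^{1+α}` for all Borel `E` (for some `c > 0`, `α > 0`), then `μ` is purely
atomic: it is concentrated on a countable set (hence a countable sum of weighted Diracs). -/
theorem stmt9 (n : ℕ) (μ ν : Measure (Fin n → ℝ))
    [IsFiniteMeasure μ] [IsFiniteMeasure ν]
    (habs : μ ≪ ν) (c α : ℝ) (hc : 0 < c) (hα : 0 < α)
    (hest : ∀ E : Set (Fin n → ℝ), MeasurableSet E →
      μ E ≤ ENNReal.ofReal c * (ν E) ^ (1 + α)) :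
    ∃ s : Set (Fin n → ℝ), s.Countable ∧ μ sᶜ = 0 := by
  set s : Set (Fin n → ℝ) := {x | 0 < ν {x}} with hs
  have hsc : s.Countable := by
    exact MeasureTheory.Measure.countable_meas_pos_of_disjoint_iUnion
      (μ := ν) (As := fun x : (Fin n → ℝ) => {x})
      (fun x => measurableSet_singleton x)
      (fun x y hxy => by simp [Function.onFun, hxy])
  refine ⟨s, hsc, ?_⟩
  -- rnDeriv vanishes a.e. outside s
  have key : ∀ᵐ x ∂ν, x ∉ s → μ.rnDeriv ν x = 0 := by
    filter_upwards [Besicovitch.ae_tendsto_rnDeriv μ ν] with x hx hxs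
    have hν0 : ν {x} = 0 := by
      simpa [hs] using hxs
    -- ν (closedBall x r) → 0 as r → 0+
    have h1 : Tendsto (fun r => ν (closedBall x r)) (nhdsWithin 0 (Ioi 0)) (nhds 0) := by
      have := tendsto_measure_cthickening_of_isClosed (μ := ν) (s := ({x} : Set (Fin n → ℝ)))
        ⟨1, zero_lt_one, measure_ne_top ν _⟩ isClosed_singleton
      rw [hν0] at this
      have h2 : ∀ᶠ r in nhdsWithin (0:ℝ) (Ioi 0),
          ν (cthickening r {x}) = ν (closedBall x r) := by
        filter_upwards [self_mem_nhdsWithin] with r hr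
        rw [cthickening_singleton x (le_of_lt hr)]
      exact ((this.mono_left nhdsWithin_le_nhds).congr' h2)
    -- the bound: ratio ≤ c * ν(ball)^α
    have hb : ∀ᶠ r in nhdsWithin (0:ℝ) (Ioi 0),
        μ (closedBall x r) / ν (closedBall x r)
          ≤ ENNReal.ofReal c * (ν (closedBall x r)) ^ α := by
      filter_upwards [self_mem_nhdsWithin] with r _
      set a := ν (closedBall x r) with ha
      rcases eq_or_ne a 0 with h0 | h0
      · have : μ (closedBall x r) = 0 := habs h0
        simp [this]
      · have hat : a ≠ ⊤ := measure_ne_top ν _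
        have := hest (closedBall x r) measurableSet_closedBall
        calc μ (closedBall x r) / a ≤ (ENNReal.ofReal c * a ^ (1+α)) / a :=
              ENNReal.div_le_div_right this a
          _ = ENNReal.ofReal c * a ^ α := by
              rw [ENNReal.rpow_add 1 α h0 hat, ENNReal.rpow_one, ← mul_assoc,
                mul_comm (ENNReal.ofReal c) a, mul_assoc, mul_div_assoc,
                ENNReal.mul_div_cancel h0 hat]
    -- RHS tends to 0
    have h3 : Tendsto (fun r => ENNReal.ofReal c * (ν (closedBall x r)) ^ α)
        (nhdsWithin 0 (Ioi 0)) (nhds 0) := by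
      exact (ENNReal.tendsto_const_mul_rpow_nhds_zero_of_pos ENNReal.ofReal_ne_top hα).comp h1
    have := le_of_tendsto_of_tendsto hx h3 hb
    simpa using this
  have hsm : MeasurableSet s := hsc.measurableSet
  have : μ = ν.withDensity (μ.rnDeriv ν) := (@Measure.withDensity_rnDeriv_eq _ _ μ ν (Measure.haveLebesgueDecomposition_of_sigmaFinite μ ν) habs).symm
  rw [this, withDensity_apply _ hsm.compl]
  rw [setLIntegral_congr_fun_ae hsm.compl (by filter_upwards [key] with x h hx using h hx)]
  simp
end

section
/- Let ξ, v be nonzero vectors in ℂⁿ and ℂ^d respectively, and let f : ℂ → ℂ be holomorphic on an open set U ⊂ ℂ. Define u(x) = f(x·ξ) v for x ∈ ℝⁿ with x·ξ ∈ U, where x·ξ = Σ x_i ξ_i. Then for each l, the l-th total derivative satisfies D^l u(x) = f^{(l)}(x·ξ) · v ⊗ ξ^{⊗l}. Consequently, if B is a k-th order homogeneous operator with symbol B(·) and B(ξ)v = 0, then Bu = 0 on {x : x·ξ ∈ U}. -/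
/-!
Write `x·ξ = L x` for a real-linear map `L : ℝⁿ → ℂ`, so that `u = (· • v) ∘ f ∘ L`. Linear maps
on either side pass through iterated derivatives, and since `f` is holomorphic its real iterated
derivative is the complex one, `D^l f(z)[m] = (∏ mⱼ) f^{(l)}(z)`. Evaluating `D^k u(x)` on
coordinate vectors then factors `f^{(k)}(x·ξ)` out of `Bu(x)`, leaving the symbol `B(ξ)v = 0`.
-/

open ContinuousLinearMap

theorem ContinuousLinearMap.iteratedFDeriv_comp_right_of_contDiffOn {𝕜 E F G : Type*}
    [NontriviallyNormedField 𝕜] [NormedAddCommGroup E] [NormedSpace 𝕜 E] [NormedAddCommGroup F]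
    [NormedSpace 𝕜 F] [NormedAddCommGroup G] [NormedSpace 𝕜 G] (g : G →L[𝕜] E) {f : E → F}
    {s : Set E} {l : ℕ} (hs : IsOpen s) (hf : ContDiffOn 𝕜 l f s) {x : G} (hx : g x ∈ s) :
    iteratedFDeriv 𝕜 l (f ∘ g) x =
      (iteratedFDeriv 𝕜 l f (g x)).compContinuousLinearMap fun _ => g := by
  have hs' : IsOpen (g ⁻¹' s) := hs.preimage g.continuous
  rw [← iteratedFDerivWithin_of_isOpen l hs' hx, ← iteratedFDerivWithin_of_isOpen l hs hx,
    g.iteratedFDerivWithin_comp_right hf hs.uniqueDiffOn hs'.uniqueDiffOn hx le_rfl]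

theorem DifferentiableOn.iteratedFDeriv_real_apply {F : Type*} [NormedAddCommGroup F]
    [NormedSpace ℂ F] [CompleteSpace F] {f : ℂ → F} {U : Set ℂ} (hf : DifferentiableOn ℂ f U)
    (hU : IsOpen U) {z : ℂ} (hz : z ∈ U) (l : ℕ) (m : Fin l → ℂ) :
    iteratedFDeriv ℝ l f z m = (∏ i, m i) • iteratedDeriv l f z := by
  have hfz : ContDiffAt ℂ l f z := (hf.contDiffOn hU z hz).contDiffAt (hU.mem_nhds hz)
  rw [← hfz.restrictScalars_iteratedFDeriv (𝕜 := ℝ)]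
  exact iteratedFDeriv_apply_eq_iteratedDeriv_mul_prod

theorem DifferentiableOn.iteratedFDeriv_comp_smul_const_apply {E F : Type*}
    [NormedAddCommGroup E] [NormedSpace ℝ E] [NormedAddCommGroup F] [NormedSpace ℂ F]
    (L : E →L[ℝ] ℂ) {f : ℂ → ℂ} {U : Set ℂ} (hf : DifferentiableOn ℂ f U) (hU : IsOpen U)
    (v : F) {x : E} (hx : L x ∈ U) (l : ℕ) (w : Fin l → E) :
    iteratedFDeriv ℝ l (fun y => f (L y) • v) x w =
      (iteratedDeriv l f (L x) * ∏ j, L (w j)) • v := by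
  have hfU : ContDiffOn ℝ l f U := (hf.contDiffOn hU).restrict_scalars ℝ
  have hfL : ContDiffAt ℝ l (f ∘ L) x :=
    (hfU.contDiffAt (hU.mem_nhds hx)).comp x L.contDiff.contDiffAt
  change iteratedFDeriv ℝ l (fun y => (f ∘ L) y • v) x w = _
  rw [iteratedFDeriv_smul_const_apply hfL]
  simp [L.iteratedFDeriv_comp_right_of_contDiffOn hU hfU hx, hf.iteratedFDeriv_real_apply hU hx,
    mul_comm]

noncomputable def realDotCLM {n : ℕ} (ξ : Fin n → ℂ) : (Fin n → ℝ) →L[ℝ] ℂ :=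
  ∑ i, ξ i • (Complex.ofRealCLM ∘L proj i)

@[simp]
theorem realDotCLM_apply {n : ℕ} (ξ : Fin n → ℂ) (x : Fin n → ℝ) :
    realDotCLM ξ x = ∑ i, (x i : ℂ) * ξ i := by
  simp [realDotCLM, mul_comm]

theorem realDotCLM_single {n : ℕ} (ξ : Fin n → ℂ) (a : Fin n) :
    realDotCLM ξ (Pi.single a 1) = ξ a := by
  simp [Pi.single_apply, apply_ite]

theorem sum_linearMap_apply_smul_prod {ι κ M W : Type*} [Fintype ι] [Fintype κ] [DecidableEq κ]
    [AddCommGroup M] [Module ℂ M] [AddCommGroup W] [Module ℂ W]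
    (B : (κ → ι) → M →ₗ[ℂ] W) (ξ : ι → ℂ) (a : ℂ) (v : M) :
    ∑ c : κ → ι, B c ((a * ∏ j, ξ (c j)) • v) = a • ∑ c : κ → ι, (∏ j, ξ (c j)) • B c v := by
  simp [Finset.smul_sum, mul_smul]

theorem stmt16_general (n d k : ℕ) (W : Type*) [AddCommGroup W] [Module ℂ W]
    (ξ : Fin n → ℂ) (v : Fin d → ℂ)
    (U : Set ℂ) (hU : IsOpen U) (f : ℂ → ℂ) (hf : DifferentiableOn ℂ f U)
    (u : (Fin n → ℝ) → (Fin d → ℂ))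
    (hu : u = fun x => f (∑ i, (x i : ℂ) * ξ i) • v) :
    (∀ (l : ℕ) (x : Fin n → ℝ), (∑ i, (x i : ℂ) * ξ i) ∈ U →
      ∀ w : Fin l → (Fin n → ℝ),
        iteratedFDeriv ℝ l u x w =
          (iteratedDeriv l f (∑ i, (x i : ℂ) * ξ i) *
            ∏ j, ∑ i, (w j i : ℂ) * ξ i) • v) ∧
    (∀ Bc : (Fin k → Fin n) → ((Fin d → ℂ) →ₗ[ℂ] W),
      (∑ c : Fin k → Fin n, (∏ i, ξ (c i)) • Bc c v) = 0 →
      ∀ x : Fin n → ℝ, (∑ i, (x i : ℂ) * ξ i) ∈ U →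
        (∑ c : Fin k → Fin n,
          Bc c (iteratedFDeriv ℝ k u x (fun i => Pi.single (c i) (1 : ℝ)))) = 0) := by
  have hu' : u = fun x => f (realDotCLM ξ x) • v := by simpa using hu
  have derivative_formula : ∀ (l : ℕ) (x : Fin n → ℝ), (∑ i, (x i : ℂ) * ξ i) ∈ U →
      ∀ w : Fin l → (Fin n → ℝ), iteratedFDeriv ℝ l u x w =
        (iteratedDeriv l f (∑ i, (x i : ℂ) * ξ i) * ∏ j, ∑ i, (w j i : ℂ) * ξ i) • v := by
    intro l x hx w
    rw [← realDotCLM_apply] at hx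
    simpa [hu'] using hf.iteratedFDeriv_comp_smul_const_apply (realDotCLM ξ) hU v hx l w
  refine ⟨derivative_formula, fun Bc hB x hx => ?_⟩
  simp only [derivative_formula k x hx, ← realDotCLM_apply, realDotCLM_single,
    sum_linearMap_apply_smul_prod, hB, smul_zero]

/-- For nonzero `ξ ∈ ℂⁿ`, `v ∈ ℂ^d`, and `f` holomorphic on an open
`U ⊂ ℂ`, the map `u(x) = f(x·ξ)v` satisfies
`D^l u(x)[w₁,…,w_l] = f^{(l)}(x·ξ) (∏ⱼ wⱼ·ξ) v` wherever `x·ξ ∈ U`. Consequently, if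
`B` is a `k`-th order homogeneous operator whose (complexified) symbol kills `v` at `ξ`,
then `Bu = 0` on `{x : x·ξ ∈ U}`. -/
theorem stmt16 (n d k : ℕ) (W : Type*) [AddCommGroup W] [Module ℂ W]
    (ξ : Fin n → ℂ) (hξ : ξ ≠ 0) (v : Fin d → ℂ) (hv : v ≠ 0)
    (U : Set ℂ) (hU : IsOpen U) (f : ℂ → ℂ) (hf : DifferentiableOn ℂ f U)
    (u : (Fin n → ℝ) → (Fin d → ℂ))
    (hu : u = fun x => f (∑ i, (x i : ℂ) * ξ i) • v) :
    (∀ (l : ℕ) (x : Fin n → ℝ), (∑ i, (x i : ℂ) * ξ i) ∈ U →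
      ∀ w : Fin l → (Fin n → ℝ),
        iteratedFDeriv ℝ l u x w =
          (iteratedDeriv l f (∑ i, (x i : ℂ) * ξ i) *
            ∏ j, ∑ i, (w j i : ℂ) * ξ i) • v) ∧
    (∀ Bc : (Fin k → Fin n) → ((Fin d → ℂ) →ₗ[ℂ] W),
      (∑ c : Fin k → Fin n, (∏ i, ξ (c i)) • Bc c v) = 0 →
      ∀ x : Fin n → ℝ, (∑ i, (x i : ℂ) * ξ i) ∈ U →
        (∑ c : Fin k → Fin n,
          Bc c (iteratedFDeriv ℝ k u x (fun i => Pi.single (c i) (1 : ℝ)))) = 0) :=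
  stmt16_general n d k W ξ v U hU f hf u hu
end
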